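/- arXiv:2405.14360 — 2 statements merged into one kernel-verified Lean document; each statement's English description precedes it below -/
import Mathlib

section
/- Assume b1 > d1, b2 > d2 and γ^U < 0, and let θ^U be the unique real in (−K2^U(1 − d2/b2), 0) with F^U(θ^U) = F^U(K1^U(1 − d1/b1)). Let ω̃ : ℝ → ℝ be a bounded twice-differentiable solution of −ω̃'' = f(x, ω̃) on ℝ. If there exists ỹ > 0 such that ω̃(ỹ) < θ^U, then ω̃(x) → −K2^U(1 − d2/b2) as x → +∞. -/
open Filter Topology

/-- The bistable reaction term `f(ω) = b1 ω₊ (1-ω₊/K1) - d1 ω₊ - b2 ω₋ (1-ω₋/K2) + d2 ω₋`. -/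
noncomputable def reactionTerm (b1 d1 b2 d2 K1 K2 : ℝ) (w : ℝ) : ℝ :=
  b1 * max w 0 * (1 - max w 0 / K1) - d1 * max w 0
    - b2 * max (-w) 0 * (1 - max (-w) 0 / K2) + d2 * max (-w) 0

/-- The antiderivative of the reaction term, normalized to vanish at `0`. -/
noncomputable def reactionPotential (b1 d1 b2 d2 K1 K2 : ℝ) (w : ℝ) : ℝ :=
  ∫ z in (0:ℝ)..w, reactionTerm b1 d1 b2 d2 K1 K2 z

/-- The heterogeneous reaction term `f(x, ω)`: equal to `f^F` for `x < 0` and `f^U` for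
`x > 0`. -/
noncomputable def hetReaction (b1 d1 b2 d2 K1F K1U K2F K2U : ℝ) (x w : ℝ) : ℝ :=
  if x < 0 then reactionTerm b1 d1 b2 d2 K1F K2F w else reactionTerm b1 d1 b2 d2 K1U K2U w

/-- A stationary solution of `-ω'' = f(x, ω)` on `ℝ`: a `C¹` function whose derivative is
differentiable away from the interface `x = 0` with `ω'' = -f(x, ω)` there. -/
def IsStatSol (b1 d1 b2 d2 K1F K1U K2F K2U : ℝ) (w : ℝ → ℝ) : Prop :=
  Differentiable ℝ w ∧
    ∀ x : ℝ, x ≠ 0 →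
      HasDerivAt (deriv w) (-(hetReaction b1 d1 b2 d2 K1F K1U K2F K2U x (w x))) x

set_option maxHeartbeats 4000000

section AuxEscape

open Set

lemma lin_escape (u p : ℝ → ℝ) (a θ c₁ M : ℝ) (hc : 0 < c₁)
    (hu : ∀ x, HasDerivAt u (p x) x)
    (hpc : ContinuousOn p (Set.Ici a))
    (hua : θ ≤ u a) (hpa : 0 ≤ p a)
    (henergy : ∀ x, a ≤ x → θ ≤ u x → c₁ ≤ |p x|)
    (hM : ∀ x, |u x| ≤ M) : False := by
  have hudiff : Differentiable ℝ u := fun x => (hu x).differentiableAt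
  have hucont : Continuous u := hudiff.continuous
  -- Step 1: the invariant `θ ≤ u x ∧ c₁ ≤ p x` holds for all `x ≥ a`.
  have key : ∀ x, a ≤ x → θ ≤ u x ∧ c₁ ≤ p x := by
    by_contra hB
    push_neg at hB
    obtain ⟨x₀, hx₀1, hx₀2⟩ := hB
    set B : Set ℝ := {x | a ≤ x ∧ ¬(θ ≤ u x ∧ c₁ ≤ p x)} with hBdef
    have hBne : B.Nonempty := ⟨x₀, hx₀1, fun hq => absurd (hx₀2 hq.1) (not_lt.2 hq.2)⟩
    have hBbdd : BddBelow B := ⟨a, fun b hb => hb.1⟩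
    set z := sInf B with hz
    have haz : a ≤ z := le_csInf hBne fun b hb => hb.1
    have hbefore : ∀ t, a ≤ t → t < z → θ ≤ u t ∧ c₁ ≤ p t := by
      intro t hat htz
      by_contra h
      exact absurd (csInf_le hBbdd ⟨hat, h⟩) (not_le.2 htz)
    have hQz : θ ≤ u z ∧ c₁ ≤ p z := by
      rcases eq_or_lt_of_le haz with heq | hlt
      · refine ⟨heq ▸ hua, ?_⟩
        have := henergy a le_rfl hua
        rw [abs_of_nonneg hpa] at this
        exact heq ▸ this
      · have hne : (𝓝[Set.Ico a z] z).NeBot := by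
          rw [← mem_closure_iff_nhdsWithin_neBot, closure_Ico hlt.ne]
          exact ⟨haz, le_rfl⟩
        have hev : ∀ᶠ t in 𝓝[Set.Ico a z] z, θ ≤ u t ∧ c₁ ≤ p t := by
          filter_upwards [self_mem_nhdsWithin] with t ht
          exact hbefore t ht.1 ht.2
        have hut : Tendsto u (𝓝[Set.Ico a z] z) (𝓝 (u z)) :=
          (hucont.continuousAt).continuousWithinAt
        have hpt : Tendsto p (𝓝[Set.Ico a z] z) (𝓝 (p z)) :=
          (hpc z haz).mono_left (nhdsWithin_mono _ (fun t ht => ht.1))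
        exact ⟨ge_of_tendsto hut (hev.mono fun t ht => ht.1),
               ge_of_tendsto hpt (hev.mono fun t ht => ht.2)⟩
    have hpz : (0:ℝ) < c₁ / 2 := by linarith
    have hmem : {t | c₁ / 2 < p t} ∈ 𝓝[Set.Ici a] z :=
      (hpc z haz) (Ioi_mem_nhds (by linarith [hQz.2]))
    have hmem' : {t | c₁ / 2 < p t} ∈ 𝓝[Set.Ici z] z :=
      nhdsWithin_mono z (Set.Ici_subset_Ici.2 haz) hmem
    obtain ⟨w, hwz, hsub⟩ := mem_nhdsGE_iff_exists_Ico_subset.1 hmem'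
    have hzw : z < w := hwz
    have hzm : z < (z + w) / 2 := by linarith
    have hmw : (z + w) / 2 < w := by linarith
    set m := (z + w) / 2 with hm
    have hppos : ∀ t ∈ Set.Icc z m, c₁ / 2 < p t := fun t ht =>
      hsub ⟨ht.1, lt_of_le_of_lt ht.2 hmw⟩
    have hmono : StrictMonoOn u (Set.Icc z m) := by
      apply strictMonoOn_of_deriv_pos (convex_Icc z m) hucont.continuousOn
      intro t ht
      rw [interior_Icc] at ht
      rw [(hu t).deriv]
      exact lt_trans hpz (hppos t ⟨ht.1.le, ht.2.le⟩)
    have hQright : ∀ t ∈ Set.Icc z m, θ ≤ u t ∧ c₁ ≤ p t := by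
      intro t ht
      have hut : θ ≤ u t := by
        rcases eq_or_lt_of_le ht.1 with h | h
        · exact h ▸ hQz.1
        · exact hQz.1.trans (hmono (Set.left_mem_Icc.2 hzm.le) ht h).le
      refine ⟨hut, ?_⟩
      have := henergy t (haz.trans ht.1) hut
      rw [abs_of_nonneg (le_of_lt (lt_trans hpz (hppos t ht)))] at this
      exact this
    have hge : ∀ b ∈ B, m ≤ b := by
      intro b hb
      by_contra hbm
      push_neg at hbm
      rcases lt_or_ge b z with h | h
      · exact hb.2 (hbefore b hb.1 h)
      · exact hb.2 (hQright b ⟨h, hbm.le⟩)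
    have : m ≤ z := le_csInf hBne hge
    linarith
  -- Step 2: linear growth
  have hg : ∀ t : ℝ, HasDerivAt (fun s => u s - c₁ * s) (p t - c₁) t := by
    intro t
    exact ((hu t).sub ((hasDerivAt_id t).const_mul c₁)).congr_deriv (by ring)
  have hgrow : ∀ x, a ≤ x → u a + c₁ * (x - a) ≤ u x := by
    intro x hax
    have hmono : MonotoneOn (fun s => u s - c₁ * s) (Set.Ici a) := by
      apply monotoneOn_of_deriv_nonneg (convex_Ici a)
      · exact fun t _ => ((hg t).continuousAt).continuousWithinAt
      · exact fun t _ => ((hg t).differentiableAt).differentiableWithinAt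
      · intro t ht
        rw [interior_Ici] at ht
        rw [(hg t).deriv]
        linarith [(key t ht.le).2]
    have := hmono Set.self_mem_Ici (hax : x ∈ Set.Ici a) hax
    simp only at this
    linarith
  -- Step 3: contradiction
  have hM0 : 0 ≤ M := (abs_nonneg _).trans (hM a)
  have hq : 0 ≤ (2 * M + 1) / c₁ := by positivity
  have hax : a ≤ a + (2 * M + 1) / c₁ := by linarith
  have h1 := hgrow _ hax
  have h2 : c₁ * ((a + (2 * M + 1) / c₁) - a) = 2 * M + 1 := by
    field_simp
    ring
  have h3 := abs_le.1 (hM (a + (2 * M + 1) / c₁))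
  have h4 := abs_le.1 (hM a)
  linarith [h1, h3.2, h4.1]

lemma quad_escape (u p : ℝ → ℝ) (a δ M : ℝ) (hδ : 0 < δ)
    (hu : ∀ x, HasDerivAt u (p x) x)
    (hp : ∀ x, a ≤ x → ∃ q, HasDerivAt p q x ∧ q ≤ -δ)
    (hM : ∀ x, |u x| ≤ M) : False := by
  -- step 1 : p x ≤ p a - δ (x - a) on [a, ∞)
  have hpc : ∀ x, a ≤ x → ContinuousAt p x := fun x hx =>
    ((hp x hx).choose_spec.1).continuousAt
  have step1 : ∀ x, a ≤ x → p x ≤ p a - δ * (x - a) := by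
    intro x hax
    have hmono : AntitoneOn (fun s => p s + δ * s) (Set.Ici a) := by
      apply antitoneOn_of_deriv_nonpos (convex_Ici a)
      · intro t ht
        exact ((hpc t ht).add (continuous_const.mul continuous_id).continuousAt).continuousWithinAt
      · intro t ht
        rw [interior_Ici] at ht
        obtain ⟨q, hq, _⟩ := hp t ht.le
        exact ((hq.add ((hasDerivAt_id t).const_mul δ)).differentiableAt).differentiableWithinAt
      · intro t ht
        rw [interior_Ici] at ht
        obtain ⟨q, hq, hqle⟩ := hp t ht.le
        have : HasDerivAt (fun s => p s + δ * s) (q + δ * 1) t :=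
          hq.add ((hasDerivAt_id t).const_mul δ)
        rw [this.deriv]
        linarith
    have := hmono Set.self_mem_Ici (hax : x ∈ Set.Ici a) hax
    simp only at this
    linarith
  -- step 2 : u x ≤ u a + p a (x-a) - δ (x-a)^2/2
  have step2 : ∀ x, a ≤ x → u x ≤ u a + p a * (x - a) - δ * (x - a)^2 / 2 := by
    intro x hax
    have hg : ∀ t : ℝ, HasDerivAt
        (fun s => u s - (p a * (s - a) - δ * (s - a)^2 / 2)) (p t - (p a - δ * (t - a))) t := by
      intro t
      have h1 : HasDerivAt (fun s : ℝ => s - a) 1 t := by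
        simpa using (hasDerivAt_id t).sub_const a
      have h2 : HasDerivAt (fun s : ℝ => p a * (s - a) - δ * (s - a)^2 / 2)
          (p a * 1 - δ * (2 * (t - a)^1 * 1) / 2) t :=
        ((h1.const_mul (p a)).sub (((h1.pow 2).const_mul δ).div_const 2))
      have := (hu t).sub h2
      exact this.congr_deriv (by ring)
    have hmono : AntitoneOn (fun s => u s - (p a * (s - a) - δ * (s - a)^2 / 2)) (Set.Ici a) := by
      apply antitoneOn_of_deriv_nonpos (convex_Ici a)
      · exact fun t _ => ((hg t).continuousAt).continuousWithinAt
      · exact fun t _ => ((hg t).differentiableAt).differentiableWithinAt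
      · intro t ht
        rw [interior_Ici] at ht
        rw [(hg t).deriv]
        linarith [step1 t ht.le]
    have := hmono Set.self_mem_Ici (hax : x ∈ Set.Ici a) hax
    simp only [sub_self] at this
    have h0 : u a - (p a * (a - a) - δ * (a - a)^2 / 2) = u a := by ring
    calc u x ≤ u x := le_rfl
    _ = (u x - (p a * (x - a) - δ * (x - a)^2 / 2)) + (p a * (x - a) - δ * (x - a)^2 / 2) := by ring
    _ ≤ u a + (p a * (x - a) - δ * (x - a)^2 / 2) := by
        rw [← h0] at *; linarith [this]
    _ = u a + p a * (x - a) - δ * (x - a)^2 / 2 := by ring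
  -- step 3 : contradiction
  have hM0 : 0 ≤ M := (abs_nonneg _).trans (hM a)
  obtain ⟨t, htpos, hδt⟩ : ∃ t : ℝ, 1 ≤ t ∧ 2 * (|p a| + 2 * M + 1) ≤ δ * t := by
    refine ⟨2 * (|p a| + 2 * M + 1) / δ + 1, ?_, ?_⟩
    · have : 0 ≤ 2 * (|p a| + 2 * M + 1) / δ := by positivity
      linarith
    · have h : δ * (2 * (|p a| + 2 * M + 1) / δ) = 2 * (|p a| + 2 * M + 1) := by
        field_simp
      nlinarith
  have ht0 : (0:ℝ) ≤ t := by linarith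
  have hax : a ≤ a + t := by linarith
  have h1 := step2 (a + t) hax
  have h2 : a + t - a = t := by ring
  rw [h2] at h1
  have h3 := abs_le.1 (hM (a + t))
  have h4 := abs_le.1 (hM a)
  have h5 : p a * t ≤ |p a| * t := mul_le_mul_of_nonneg_right (le_abs_self _) ht0
  have h6 : (|p a| + 2 * M + 1) * t ≤ δ * t ^ 2 / 2 := by
    nlinarith [mul_le_mul_of_nonneg_right hδt ht0]
  have h7 : |p a| * t + 2 * M + 1 ≤ (|p a| + 2 * M + 1) * t := by
    nlinarith [mul_le_mul_of_nonneg_left htpos (by linarith : (0:ℝ) ≤ 2 * M + 1)]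
  linarith [h1, h3.1, h4.2, h5, h6, h7]

lemma reaction_cont (b1 d1 b2 d2 K1 K2 : ℝ) : Continuous (reactionTerm b1 d1 b2 d2 K1 K2) := by
  unfold reactionTerm
  fun_prop

lemma reaction_neg (b1 d1 b2 d2 K1 K2 : ℝ) (hb2 : 0 < b2) (hK2 : 0 < K2) {w : ℝ} (hw : w ≤ 0) :
    reactionTerm b1 d1 b2 d2 K1 K2 w = (b2 / K2) * w * (w + K2 * (1 - d2 / b2)) := by
  unfold reactionTerm
  rw [max_eq_right hw, max_eq_left (neg_nonneg.2 hw)]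
  field_simp
  ring

lemma reaction_pos (b1 d1 b2 d2 K1 K2 : ℝ) (hb1 : 0 < b1) (hK1 : 0 < K1) {w : ℝ} (hw : 0 ≤ w) :
    reactionTerm b1 d1 b2 d2 K1 K2 w = (b1 / K1) * w * (K1 * (1 - d1 / b1) - w) := by
  unfold reactionTerm
  rw [max_eq_left hw, max_eq_right (neg_nonpos.2 hw)]
  field_simp
  ring

lemma potential_neg (b1 d1 b2 d2 K1 K2 : ℝ) (hb2 : 0 < b2) (hK2 : 0 < K2) {w : ℝ} (hw : w ≤ 0) :
    reactionPotential b1 d1 b2 d2 K1 K2 w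
      = (b2 / K2) * (w^3 / 3 + K2 * (1 - d2 / b2) * w^2 / 2) := by
  unfold reactionPotential
  rw [intervalIntegral.integral_eq_sub_of_hasDerivAt (f := fun z =>
      (b2 / K2) * (z^3 / 3 + K2 * (1 - d2 / b2) * z^2 / 2))
    (fun z hz => ?_) ((reaction_cont b1 d1 b2 d2 K1 K2).intervalIntegrable 0 w)]
  · simp
  · have hz0 : z ≤ 0 := by
      rw [Set.uIcc_of_ge hw] at hz
      exact hz.2
    rw [reaction_neg b1 d1 b2 d2 K1 K2 hb2 hK2 hz0]
    have h1 : HasDerivAt (fun z : ℝ => (b2 / K2) * (z^3 / 3 + K2 * (1 - d2 / b2) * z^2 / 2))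
        ((b2 / K2) * ((3 * z^2 * 1) / 3 + K2 * (1 - d2 / b2) * (2 * z^1 * 1) / 2)) z := by
      exact ((((hasDerivAt_id z).pow 3).div_const 3).add
        ((((hasDerivAt_id z).pow 2).const_mul (K2 * (1 - d2 / b2))).div_const 2)).const_mul _
    exact h1.congr_deriv (by ring)

lemma potential_pos (b1 d1 b2 d2 K1 K2 : ℝ) (hb1 : 0 < b1) (hK1 : 0 < K1) {w : ℝ} (hw : 0 ≤ w) :
    reactionPotential b1 d1 b2 d2 K1 K2 w
      = (b1 / K1) * (K1 * (1 - d1 / b1) * w^2 / 2 - w^3 / 3) := by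
  unfold reactionPotential
  rw [intervalIntegral.integral_eq_sub_of_hasDerivAt (f := fun z =>
      (b1 / K1) * (K1 * (1 - d1 / b1) * z^2 / 2 - z^3 / 3))
    (fun z hz => ?_) ((reaction_cont b1 d1 b2 d2 K1 K2).intervalIntegrable 0 w)]
  · simp
  · have hz0 : 0 ≤ z := by
      rw [Set.uIcc_of_le hw] at hz
      exact hz.1
    rw [reaction_pos b1 d1 b2 d2 K1 K2 hb1 hK1 hz0]
    have h1 : HasDerivAt (fun z : ℝ => (b1 / K1) * (K1 * (1 - d1 / b1) * z^2 / 2 - z^3 / 3))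
        ((b1 / K1) * (K1 * (1 - d1 / b1) * (2 * z^1 * 1) / 2 - (3 * z^2 * 1) / 3)) z := by
      exact (((((hasDerivAt_id z).pow 2).const_mul (K1 * (1 - d1 / b1))).div_const 2).sub
        (((hasDerivAt_id z).pow 3).div_const 3)).const_mul _
    exact h1.congr_deriv (by ring)

lemma potential_hasDerivAt (b1 d1 b2 d2 K1 K2 : ℝ) (w : ℝ) :
    HasDerivAt (reactionPotential b1 d1 b2 d2 K1 K2) (reactionTerm b1 d1 b2 d2 K1 K2 w) w :=
  ((reaction_cont b1 d1 b2 d2 K1 K2).integral_hasStrictDerivAt 0 w).hasDerivAt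

lemma le_of_sq_le_sq' {a b : ℝ} (ha : 0 ≤ a) (hb : 0 ≤ b) (h : a^2 ≤ b^2) : a ≤ b := by
  nlinarith

end AuxEscape


/-- Lemma lem:omega_monotone_U: a bounded stationary solution which is below
`θ^U` somewhere on `{x > 0}` converges to `-K2^U (1 - d2/b2)` as `x → +∞`. -/
theorem stmt10 (b1 b2 d1 d2 K1F K1U K2F K2U : ℝ)
    (hb1 : 0 < b1) (hb2 : 0 < b2) (hd1 : 0 < d1) (hd2 : 0 < d2)
    (hK1F : 0 < K1F) (hK1U : 0 < K1U) (hK2F : 0 < K2F) (hK2U : 0 < K2U)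
    (hbd1 : d1 < b1) (hbd2 : d2 < b2)
    -- γ^U < 0
    (hγU : reactionPotential b1 d1 b2 d2 K1U K2U (K1U * (1 - d1 / b1))
            - reactionPotential b1 d1 b2 d2 K1U K2U (-(K2U * (1 - d2 / b2))) < 0)
    -- θ^U : the unique real in (-K2^U(1 - d2/b2), 0) with F^U(θ^U) = F^U(K1^U(1 - d1/b1))
    (θU : ℝ) (hθmem : θU ∈ Set.Ioo (-(K2U * (1 - d2 / b2))) 0)
    (hθval : reactionPotential b1 d1 b2 d2 K1U K2U θU
      = reactionPotential b1 d1 b2 d2 K1U K2U (K1U * (1 - d1 / b1)))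
    -- ω̃ : a bounded (twice-differentiable) solution of -ω̃'' = f(x, ω̃)
    (ω : ℝ → ℝ)
    (hsol : IsStatSol b1 d1 b2 d2 K1F K1U K2F K2U ω)
    (hbdd : ∃ M : ℝ, ∀ x, |ω x| ≤ M)
    -- the solution is below θ^U at some point ỹ > 0
    (hy : ∃ y : ℝ, 0 < y ∧ ω y < θU) :
    Tendsto ω atTop (𝓝 (-(K2U * (1 - d2 / b2)))) := by
  obtain ⟨M, hM⟩ := hbdd
  obtain ⟨y, hy0, hyθ⟩ := hy
  obtain ⟨hθ1, hθ2⟩ := hθmem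
  obtain ⟨K, hK⟩ : ∃ t, t = K2U * (1 - d2 / b2) := ⟨_, rfl⟩
  obtain ⟨Kp, hKp⟩ : ∃ t, t = K1U * (1 - d1 / b1) := ⟨_, rfl⟩
  obtain ⟨c2, hc2⟩ : ∃ t, t = b2 / K2U := ⟨_, rfl⟩
  obtain ⟨c1, hc1⟩ : ∃ t, t = b1 / K1U := ⟨_, rfl⟩
  obtain ⟨F, hF⟩ : ∃ t, t = reactionPotential b1 d1 b2 d2 K1U K2U := ⟨_, rfl⟩
  obtain ⟨f, hf⟩ : ∃ t, t = reactionTerm b1 d1 b2 d2 K1U K2U := ⟨_, rfl⟩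
  obtain ⟨u, hudef⟩ : ∃ t, t = ω := ⟨_, rfl⟩
  obtain ⟨p, hpdef⟩ : ∃ t, t = deriv ω := ⟨_, rfl⟩
  rw [← hK] at hθ1 hγU ⊢
  rw [← hKp] at hγU hθval
  rw [← hF] at hγU hθval
  rw [← hudef] at hM hyθ ⊢
  -- basic positivity
  have hKpos : 0 < K := by
    rw [hK]
    have : d2 / b2 < 1 := (div_lt_one hb2).2 hbd2
    nlinarith
  have hKppos : 0 < Kp := by
    rw [hKp]
    have : d1 / b1 < 1 := (div_lt_one hb1).2 hbd1
    nlinarith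
  have hc2pos : 0 < c2 := by rw [hc2]; positivity
  have hc1pos : 0 < c1 := by rw [hc1]; positivity
  have hM0 : 0 ≤ M := (abs_nonneg _).trans (hM 0)
  -- potential formulas
  have hFneg : ∀ w : ℝ, w ≤ 0 → F w = c2 * (w^3/3 + K * w^2/2) := by
    intro w hw
    rw [hF, potential_neg b1 d1 b2 d2 K1U K2U hb2 hK2U hw, ← hK, ← hc2]
  have hFpos : ∀ w : ℝ, 0 ≤ w → F w = c1 * (Kp * w^2/2 - w^3/3) := by
    intro w hw
    rw [hF, potential_pos b1 d1 b2 d2 K1U K2U hb1 hK1U hw, ← hKp, ← hc1]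
  have hH2 : F (-K) = c2 * K^3/6 := by
    rw [hFneg _ (by linarith)]; ring
  have hH1 : F Kp = c1 * Kp^3/6 := by
    rw [hFpos _ hKppos.le]; ring
  have hθeq : F θU = c1 * Kp^3/6 := by rw [hθval, hH1]
  have hH12 : c1 * Kp^3/6 < c2 * K^3/6 := by
    rw [hH1, hH2] at hγU; linarith
  -- solution facts
  have hudiff : Differentiable ℝ u := hudef ▸ hsol.1
  have hucont : Continuous u := hudiff.continuous
  have hu : ∀ x, HasDerivAt u (p x) x := fun x => hpdef ▸ hudef ▸ (hsol.1 x).hasDerivAt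
  have hpd : ∀ x, 0 < x → HasDerivAt p (-(f (u x))) x := by
    intro x hx
    have h := hsol.2 x (ne_of_gt hx)
    rw [hetReaction, if_neg (not_lt.2 hx.le)] at h
    rw [hpdef, hf, hudef]
    exact h
  have hpc : ∀ x, 0 < x → ContinuousAt p x := fun x hx =>
    (hpd x hx).differentiableAt.continuousAt
  have hFd : ∀ w : ℝ, HasDerivAt F (f w) w := fun w =>
    hF ▸ hf ▸ potential_hasDerivAt b1 d1 b2 d2 K1U K2U w
  -- energy conservation
  have hE : ∀ x, y ≤ x → (p x)^2/2 + F (u x) = (p y)^2/2 + F (u y) := by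
    have hEd : ∀ t, 0 < t → HasDerivAt (fun s => (p s)^2/2 + F (u s)) 0 t := by
      intro t ht
      have h1 : HasDerivAt (fun s => (p s)^2/2) ((2 * p t ^ 1 * (-(f (u t))))/2) t :=
        ((hpd t ht).pow 2).div_const 2
      have h2 : HasDerivAt (fun s => F (u s)) (f (u t) * p t) t := by
        exact (hFd (u t)).comp t (hu t)
      have h3 := h1.add h2
      exact h3.congr_deriv (by ring)
    intro x hx
    exact constant_of_has_deriv_right_zero (f := fun s => (p s)^2/2 + F (u s))
      (fun t ht => ((hEd t (lt_of_lt_of_le hy0 ht.1)).continuousAt).continuousWithinAt)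
      (fun t ht => (hEd t (lt_of_lt_of_le hy0 ht.1)).hasDerivWithinAt)
      x ⟨hx, le_rfl⟩
  obtain ⟨E₀, hE₀⟩ : ∃ t, t = (p y)^2/2 + F (u y) := ⟨_, rfl⟩
  rw [← hE₀] at hE
  have hFle : ∀ x, y ≤ x → F (u x) ≤ E₀ := by
    intro x hx
    nlinarith [sq_nonneg (p x), hE x hx]
  have hp2 : ∀ x, y ≤ x → (p x)^2 = 2*(E₀ - F (u x)) := by
    intro x hx
    linarith [hE x hx]
  -- global potential bounds
  have hFleH2 : ∀ w : ℝ, F w ≤ c2 * K^3/6 := by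
    intro w
    rcases le_or_gt w 0 with hw | hw
    · rw [hFneg w hw]
      nlinarith [mul_nonneg (mul_nonneg hc2pos.le (sq_nonneg (w + K)))
        (by linarith : (0:ℝ) ≤ K/2 - w)]
    · rw [hFpos w hw.le]
      have h1 : c1 * (Kp * w^2/2 - w^3/3) ≤ c1 * Kp^3/6 := by
        nlinarith [mul_nonneg (mul_nonneg hc1pos.le (sq_nonneg (w - Kp)))
          (by linarith : (0:ℝ) ≤ 2*w + Kp)]
      linarith
  have hFleH1 : ∀ w : ℝ, θU ≤ w → F w ≤ c1 * Kp^3/6 := by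
    intro w hwθ
    rcases le_or_gt w 0 with hw | hw
    · rw [hFneg w hw, ← hθeq, hFneg θU hθ2.le]
      have hb : 2*(θU^2+θU*w+w^2)+3*K*(θU+w) ≤ 0 := by
        nlinarith [mul_nonneg (by linarith : (0:ℝ) ≤ K + θU) (by linarith : (0:ℝ) ≤ -θU),
                   mul_nonneg (by linarith : (0:ℝ) ≤ w - θU) (by linarith : (0:ℝ) ≤ -w),
                   mul_nonneg hKpos.le (by linarith : (0:ℝ) ≤ -θU),
                   mul_nonneg hKpos.le (by linarith : (0:ℝ) ≤ -w)]
      nlinarith [mul_nonneg (mul_nonneg hc2pos.le (by linarith : (0:ℝ) ≤ w - θU))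
        (by linarith : (0:ℝ) ≤ -(2*(θU^2+θU*w+w^2)+3*K*(θU+w)))]
    · rw [hFpos w hw.le]
      nlinarith [mul_nonneg (mul_nonneg hc1pos.le (sq_nonneg (w - Kp)))
        (by linarith : (0:ℝ) ≤ 2*w + Kp)]
  have hFgtH1 : ∀ w : ℝ, -K ≤ w → w < θU → c1 * Kp^3/6 < F w := by
    intro w hwK hwθ
    rw [← hθeq, hFneg θU hθ2.le, hFneg w (by linarith : w ≤ 0)]
    have hb : 2*(w^2+w*θU+θU^2)+3*K*(w+θU) < 0 := by
      nlinarith [mul_nonneg (by linarith : (0:ℝ) ≤ K + w) (by linarith : (0:ℝ) ≤ -w),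
                 mul_nonneg (by linarith : (0:ℝ) ≤ θU - w) (by linarith : (0:ℝ) ≤ -θU),
                 mul_pos hKpos (by linarith : (0:ℝ) < -w),
                 mul_pos hKpos (by linarith : (0:ℝ) < -θU)]
    nlinarith [mul_pos (mul_pos hc2pos (by linarith : (0:ℝ) < θU - w))
      (by linarith : (0:ℝ) < -(2*(w^2+w*θU+θU^2)+3*K*(w+θU)))]
  -- contradiction helpers
  have left_contra : ∀ δ₀ : ℝ, 0 < δ₀ → (∀ x, y ≤ x → u x ≤ -K - δ₀) → False := by
    intro δ₀ hδ₀ hall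
    apply quad_escape u p y (c2*δ₀*(K+δ₀)) M
      (mul_pos (mul_pos hc2pos hδ₀) (by linarith)) hu _ hM
    intro x hx
    refine ⟨-(f (u x)), hpd x (lt_of_lt_of_le hy0 hx), ?_⟩
    have hux := hall x hx
    have hux0 : u x ≤ 0 := by linarith
    have hfx : f (u x) = c2 * u x * (u x + K) := by
      rw [hf, reaction_neg b1 d1 b2 d2 K1U K2U hb2 hK2U hux0, ← hK, ← hc2]
    rw [hfx]
    have h1 : (K + δ₀) * δ₀ ≤ (-u x) * (-(u x + K)) := by
      nlinarith [mul_nonneg (by linarith : (0:ℝ) ≤ -u x - K - δ₀) (by linarith : (0:ℝ) ≤ -(u x + K)),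
        mul_nonneg (by linarith : (0:ℝ) ≤ -u x - K - δ₀) hδ₀.le]
    have h2 : c2 * ((K + δ₀) * δ₀) ≤ c2 * ((-u x) * (-(u x + K))) :=
      mul_le_mul_of_nonneg_left h1 hc2pos.le
    nlinarith [h2]
  have right_contra : ∀ δ₀ : ℝ, 0 < δ₀ → (∀ x, y ≤ x → -K + δ₀ ≤ u x) →
      (∀ x, y ≤ x → u x ≤ θU) → False := by
    intro δ₀ hδ₀ hall hbel
    apply quad_escape (fun t => -u t) (fun t => -p t) y (c2*(-θU)*δ₀) M
      (mul_pos (mul_pos hc2pos (by linarith)) hδ₀)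
      (fun x => (hu x).neg) _ (fun x => by rw [abs_neg]; exact hM x)
    intro x hx
    refine ⟨f (u x), ?_, ?_⟩
    · exact (hpd x (lt_of_lt_of_le hy0 hx)).neg.congr_deriv (neg_neg _)
    · have h1 := hall x hx
      have h2 := hbel x hx
      have hfx : f (u x) = c2 * u x * (u x + K) := by
        rw [hf, reaction_neg b1 d1 b2 d2 K1U K2U hb2 hK2U (by linarith : u x ≤ 0), ← hK, ← hc2]
      rw [hfx]
      have h3 : u x * (u x + K) ≤ θU * δ₀ := by
        nlinarith [mul_le_mul_of_nonneg_right (by linarith : u x ≤ θU) hδ₀.le,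
          mul_nonneg (by linarith : (0:ℝ) ≤ -u x) (by linarith : (0:ℝ) ≤ (u x + K) - δ₀)]
      nlinarith [mul_le_mul_of_nonneg_left h3 hc2pos.le]
  have sep_contra : ∀ ε : ℝ, 0 < ε → (∀ x, y ≤ x → F (u x) ≤ c2*K^3/6 - ε) →
      (∀ x, y ≤ x → u x ≤ θU) → False := by
    intro ε hε hFb hθb
    have hKM : (0:ℝ) < K/2 + M := by linarith
    have hA : (0:ℝ) < c2 * (K/2 + M) := mul_pos hc2pos hKM
    obtain ⟨δ₀, hδ₀, hδ₀sq⟩ : ∃ δ : ℝ, 0 < δ ∧ δ^2 * (c2*(K/2+M)) = 3*ε := by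
      refine ⟨Real.sqrt (3*ε/(c2*(K/2+M))), Real.sqrt_pos.2 (by positivity), ?_⟩
      rw [Real.sq_sqrt (by positivity)]
      field_simp
    have hsq : ∀ x, y ≤ x → δ₀^2 ≤ (u x + K)^2 := by
      intro x hx
      have h1 := hFb x hx
      have h2 : u x ≤ 0 := by linarith [hθb x hx]
      rw [hFneg _ h2] at h1
      have h3 : (0:ℝ) ≤ M + u x := by linarith [(abs_le.1 (hM x)).1]
      have hstep : 3*ε ≤ (u x + K)^2 * (c2*(K/2+M)) := by
        nlinarith [mul_nonneg (mul_nonneg hc2pos.le (sq_nonneg (u x + K))) h3]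
      rw [← hδ₀sq] at hstep
      exact le_of_mul_le_mul_right hstep hA
    rcases lt_or_ge (u y) (-K) with hside | hside
    · apply left_contra δ₀ hδ₀
      intro x hx
      have h4 := hsq x hx
      have h5 : u x < -K := by
        by_contra hge
        push_neg at hge
        obtain ⟨t, ht, hut⟩ := intermediate_value_Icc hx hucont.continuousOn ⟨hside.le, hge⟩
        have h6 := hsq t ht.1
        rw [hut] at h6
        nlinarith
      nlinarith [h4, h5]
    · have hyne : -K < u y := by
        rcases eq_or_lt_of_le hside with h | h
        · exfalso
          have h6 := hsq y le_rfl
          rw [← h] at h6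
          nlinarith
        · exact h
      apply right_contra δ₀ hδ₀ _ hθb
      intro x hx
      have h4 := hsq x hx
      have h5 : -K < u x := by
        by_contra hge
        push_neg at hge
        obtain ⟨t, ht, hut⟩ := intermediate_value_Icc' hx hucont.continuousOn ⟨hge, hyne.le⟩
        have h6 := hsq t ht.1
        rw [hut] at h6
        nlinarith
      nlinarith [h4, h5]
  -- main case analysis
  rcases le_or_gt E₀ (c1 * Kp^3/6) with hE1 | hE1
  · -- case 3 : E₀ ≤ H1 : contradiction
    exfalso
    have hyK : u y < -K := by
      by_contra hge
      push_neg at hge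
      have := hFgtH1 (u y) hge hyθ
      linarith [hFle y le_rfl]
    have hall : ∀ x, y ≤ x → u x ≤ θU := by
      intro x hx
      by_contra hgt
      push_neg at hgt
      obtain ⟨t, ht, hut⟩ := intermediate_value_Icc hx hucont.continuousOn
        ⟨hyK.le, by linarith⟩
      have h6 := hFle t ht.1
      rw [hut, hH2] at h6
      linarith
    exact sep_contra (c2*K^3/6 - c1*Kp^3/6) (by linarith)
      (fun x hx => by linarith [hFle x hx]) hall
  · -- E₀ > H1 : the solution stays below θU
    have hlt : ∀ x, y ≤ x → u x < θU := by
      by_contra hS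
      push_neg at hS
      obtain ⟨x₂, hx₂, hx₂θ⟩ := hS
      have hScl : IsClosed (Set.Ici y ∩ u ⁻¹' (Set.Ici θU)) :=
        isClosed_Ici.inter (isClosed_Ici.preimage hucont)
      have hSne : (Set.Ici y ∩ u ⁻¹' (Set.Ici θU)).Nonempty := ⟨x₂, hx₂, hx₂θ⟩
      have hSbdd : BddBelow (Set.Ici y ∩ u ⁻¹' (Set.Ici θU)) := ⟨y, fun t ht => ht.1⟩
      obtain ⟨hx₁y, hx₁θ⟩ := hScl.csInf_mem hSne hSbdd
      set x₁ := sInf (Set.Ici y ∩ u ⁻¹' (Set.Ici θU)) with hx₁def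
      have hx₁y' : y ≤ x₁ := hx₁y
      have hx₁θ' : θU ≤ u x₁ := hx₁θ
      have hyx₁ : y < x₁ := by
        rcases eq_or_lt_of_le hx₁y' with h | h
        · exfalso
          rw [← h] at hx₁θ'
          linarith
        · exact h
      have hpx₁ : 0 ≤ p x₁ := by
        by_contra hneg
        push_neg at hneg
        have hslope := hasDerivAt_iff_tendsto_slope.1 (hu x₁)
        have hev1 : ∀ᶠ t in 𝓝[<] x₁, slope u x₁ t < 0 :=
          (hslope.mono_left (nhdsWithin_mono _ (fun t (ht : t < x₁) => ne_of_lt ht))).eventually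
            (gt_mem_nhds hneg)
        have hev2 : ∀ᶠ t in 𝓝[<] x₁, t ∈ Set.Ioo y x₁ :=
          Ioo_mem_nhdsLT_of_mem ⟨hyx₁, le_rfl⟩
        obtain ⟨t, hts, htIoo⟩ := (hev1.and hev2).exists
        rw [slope_def_field] at hts
        have h8 : t - x₁ < 0 := by linarith [htIoo.2]
        have h7 : θU ≤ u t := by
          rcases div_neg_iff.1 hts with ⟨h, _⟩ | ⟨_, h⟩
          · linarith
          · linarith
        have : t ∈ Set.Ici y ∩ u ⁻¹' (Set.Ici θU) := ⟨htIoo.1.le, h7⟩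
        exact absurd (csInf_le hSbdd this) (not_le.2 htIoo.2)
      obtain ⟨cc, hcc, hccsq⟩ : ∃ c : ℝ, 0 < c ∧ c^2 = 2*(E₀ - c1*Kp^3/6) :=
        ⟨Real.sqrt _, Real.sqrt_pos.2 (by linarith), Real.sq_sqrt (by linarith)⟩
      exact lin_escape u p x₁ θU cc M hcc hu
        (fun t ht => (hpc t (lt_of_lt_of_le hy0 (le_trans hx₁y' ht))).continuousWithinAt)
        hx₁θ' hpx₁
        (fun x hx hθx => le_of_sq_le_sq' hcc.le (abs_nonneg _)
          (by rw [sq_abs]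
              linarith [hp2 x (le_trans hx₁y' hx), hFleH1 (u x) hθx, hccsq]))
        hM
    rcases lt_trichotomy E₀ (c2 * K^3/6) with h2 | h2 | h2
    · -- H1 < E₀ < H2 : contradiction
      exact (sep_contra (c2*K^3/6 - E₀) (by linarith)
        (fun x hx => by linarith [hFle x hx]) (fun x hx => (hlt x hx).le)).elim
    · -- E₀ = H2 : convergence
      obtain ⟨α, hα, hαsq⟩ : ∃ a : ℝ, 0 < a ∧ a^2 = 2*c2/3*(K/2 - θU) := by
        have hpos : (0:ℝ) < 2*c2/3*(K/2 - θU) :=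
          mul_pos (by linarith) (by linarith)
        exact ⟨Real.sqrt _, Real.sqrt_pos.2 hpos, Real.sq_sqrt hpos.le⟩
      have hp2' : ∀ x, y ≤ x → (p x)^2 = 2*c2/3*((u x + K)^2*(K/2 - u x)) := by
        intro x hx
        have h3 := hp2 x hx
        rw [hFneg _ (by linarith [hlt x hx] : u x ≤ 0), h2] at h3
        linear_combination h3
      have h1x : ∀ x₀, y ≤ x₀ → 0 < u x₀ + K → 0 < p x₀ → False := by
        intro x₀ hx₀ hv hp0
        have hv2pos : 0 < (u x₀ + K)^2 := pow_pos hv 2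
        obtain ⟨cc, hcc, hccsq⟩ : ∃ c : ℝ, 0 < c ∧ c^2 = 2*c2/3*((u x₀ + K)^2*(K/2 - θU)) := by
          have hpos : (0:ℝ) < 2*c2/3*((u x₀ + K)^2*(K/2 - θU)) :=
            mul_pos (by linarith) (mul_pos hv2pos (by linarith))
          exact ⟨Real.sqrt _, Real.sqrt_pos.2 hpos, Real.sq_sqrt hpos.le⟩
        apply lin_escape u p x₀ (u x₀) cc M hcc hu
          (fun t ht => (hpc t (lt_of_lt_of_le hy0 (le_trans hx₀ ht))).continuousWithinAt)
          le_rfl hp0.le _ hM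
        intro x hx hux
        apply le_of_sq_le_sq' hcc.le (abs_nonneg _)
        rw [sq_abs, hp2' x (le_trans hx₀ hx), hccsq]
        have h5 := hlt x (le_trans hx₀ hx)
        have h6 : (u x₀ + K)^2 ≤ (u x + K)^2 :=
          pow_le_pow_left₀ hv.le (by linarith) 2
        have h7 : (u x₀ + K)^2*(K/2 - θU) ≤ (u x + K)^2*(K/2 - u x) :=
          mul_le_mul h6 (by linarith) (by linarith) (sq_nonneg _)
        linarith [mul_le_mul_of_nonneg_left h7 (by linarith : (0:ℝ) ≤ 2*c2/3)]
      have h2x : ∀ x₀, y ≤ x₀ → u x₀ + K < 0 → p x₀ < 0 → False := by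
        intro x₀ hx₀ hv hp0
        have hv2pos : 0 < (u x₀ + K)^2 := by
          have h := pow_pos (by linarith : (0:ℝ) < -(u x₀ + K)) 2
          have e : (-(u x₀ + K))^2 = (u x₀ + K)^2 := by ring
          rwa [e] at h
        obtain ⟨cc, hcc, hccsq⟩ : ∃ c : ℝ, 0 < c ∧ c^2 = 2*c2/3*((u x₀ + K)^2*(K/2 - θU)) := by
          have hpos : (0:ℝ) < 2*c2/3*((u x₀ + K)^2*(K/2 - θU)) :=
            mul_pos (by linarith) (mul_pos hv2pos (by linarith))
          exact ⟨Real.sqrt _, Real.sqrt_pos.2 hpos, Real.sq_sqrt hpos.le⟩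
        apply lin_escape (fun t => -u t) (fun t => -p t) x₀ (-u x₀) cc M hcc
          (fun x => (hu x).neg)
          (fun t ht => ((hpc t (lt_of_lt_of_le hy0 (le_trans hx₀ ht))).neg).continuousWithinAt)
          le_rfl (by show (0:ℝ) ≤ -p x₀; linarith) _ (fun x => by rw [abs_neg]; exact hM x)
        intro x hx hux
        have hux' : u x ≤ u x₀ := by simpa using hux
        rw [abs_neg]
        apply le_of_sq_le_sq' hcc.le (abs_nonneg _)
        rw [sq_abs, hp2' x (le_trans hx₀ hx), hccsq]
        have h5 := hlt x (le_trans hx₀ hx)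
        have h6 : (u x₀ + K)^2 ≤ (u x + K)^2 := by
          have hxx : u x ≤ u x₀ := hux'
          have h := pow_le_pow_left₀ (by linarith : (0:ℝ) ≤ -(u x₀ + K))
            (by linarith : -(u x₀ + K) ≤ -(u x + K)) 2
          have e1 : (-(u x₀ + K))^2 = (u x₀ + K)^2 := by ring
          have e2 : (-(u x + K))^2 = (u x + K)^2 := by ring
          rw [e1, e2] at h
          exact h
        have h7 : (u x₀ + K)^2*(K/2 - θU) ≤ (u x + K)^2*(K/2 - u x) :=
          mul_le_mul h6 (by linarith) (by linarith) (sq_nonneg _)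
        linarith [mul_le_mul_of_nonneg_left h7 (by linarith : (0:ℝ) ≤ 2*c2/3)]
      have hvp : ∀ x, y ≤ x → (u x + K) * p x ≤ -α * (u x + K)^2 := by
        intro x hx
        have hsq' : 2*c2/3*(K/2 - θU) * (u x + K)^2 ≤ (p x)^2 := by
          rw [hp2' x hx]
          have h7 : (K/2 - θU) ≤ (K/2 - u x) := by linarith [hlt x hx]
          nlinarith [mul_le_mul_of_nonneg_left h7
            (mul_nonneg (by linarith : (0:ℝ) ≤ 2*c2/3) (sq_nonneg (u x + K)))]
        rcases lt_trichotomy (u x + K) 0 with hv | hv | hv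
        · have hp0 : 0 ≤ p x := le_of_not_gt (fun h => h2x x hx hv h)
          have h8 : α * (-(u x + K)) ≤ p x := by
            apply le_of_sq_le_sq' (mul_nonneg hα.le (by linarith)) hp0
            calc (α * (-(u x + K)))^2 = α^2 * (u x + K)^2 := by ring
            _ = 2*c2/3*(K/2 - θU) * (u x + K)^2 := by rw [hαsq]
            _ ≤ (p x)^2 := hsq'
          nlinarith [mul_le_mul_of_nonneg_left h8 (by linarith : (0:ℝ) ≤ -(u x + K))]
        · rw [hv]
          simp
        · have hp0 : p x ≤ 0 := le_of_not_gt (fun h => h1x x hx hv h)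
          have h8 : α * (u x + K) ≤ -p x := by
            apply le_of_sq_le_sq' (mul_nonneg hα.le hv.le) (by linarith)
            calc (α * (u x + K))^2 = α^2 * (u x + K)^2 := by ring
            _ = 2*c2/3*(K/2 - θU) * (u x + K)^2 := by rw [hαsq]
            _ ≤ (p x)^2 := hsq'
            _ = (-p x)^2 := by ring
          nlinarith [mul_le_mul_of_nonneg_left h8 hv.le]
      have hgdAll : ∀ x : ℝ, HasDerivAt (fun s => (u s + K)^2 * Real.exp (2*α*s))
          ((2*((u x + K)*p x) + 2*α*(u x + K)^2) * Real.exp (2*α*x)) x := by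
        intro x
        have hlin : HasDerivAt (fun s : ℝ => 2*α*s) (2*α) x := by
          simpa using (hasDerivAt_id x).const_mul (2*α)
        have h := (((hu x).add_const K).pow 2).mul hlin.exp
        exact h.congr_deriv (by push_cast [Pi.pow_apply]; ring)
      have hanti : AntitoneOn (fun s => (u s + K)^2 * Real.exp (2*α*s)) (Set.Ici y) := by
        apply antitoneOn_of_deriv_nonpos (convex_Ici y)
          (fun t _ => (hgdAll t).continuousAt.continuousWithinAt)
          (fun t ht => (hgdAll t).differentiableAt.differentiableWithinAt)
        intro t ht
        rw [interior_Ici] at ht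
        rw [(hgdAll t).deriv]
        have h9 := hvp t ht.le
        have h10 : 2*((u t + K)*p t) + 2*α*(u t + K)^2 ≤ 0 := by nlinarith
        nlinarith [mul_le_mul_of_nonneg_right h10 (Real.exp_pos (2*α*t)).le]
      have hdecay : ∀ x, y ≤ x →
          (u x + K)^2 ≤ ((u y + K)^2 * Real.exp (2*α*y)) * Real.exp (-(2*α*x)) := by
        intro x hx
        have h9 := hanti Set.self_mem_Ici (hx : x ∈ Set.Ici y) hx
        have hexp := Real.exp_pos (2*α*x)
        rw [Real.exp_neg]
        have h10 : (u x + K)^2 = ((u x + K)^2 * Real.exp (2*α*x)) * (Real.exp (2*α*x))⁻¹ := by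
          field_simp
        rw [h10]
        exact mul_le_mul_of_nonneg_right h9 (inv_nonneg.2 hexp.le)
      have htop : Tendsto (fun x : ℝ => 2*α*x) atTop atTop :=
        Tendsto.const_mul_atTop (by linarith) tendsto_id
      have hexp0 : Tendsto (fun x : ℝ => Real.exp (-(2*α*x))) atTop (𝓝 0) :=
        Real.tendsto_exp_neg_atTop_nhds_zero.comp htop
      have hC : Tendsto (fun x : ℝ => ((u y + K)^2 * Real.exp (2*α*y)) * Real.exp (-(2*α*x)))
          atTop (𝓝 0) := by
        simpa using hexp0.const_mul ((u y + K)^2 * Real.exp (2*α*y))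
      have hv2 : Tendsto (fun x => (u x + K)^2) atTop (𝓝 0) := by
        apply tendsto_of_tendsto_of_tendsto_of_le_of_le' tendsto_const_nhds hC
        · exact Eventually.of_forall (fun x => sq_nonneg _)
        · filter_upwards [eventually_ge_atTop y] with x hx using hdecay x hx
      have habs2 : Tendsto (fun x => |u x + K|) atTop (𝓝 0) := by
        have hsqrt : Tendsto Real.sqrt (𝓝 0) (𝓝 0) := by
          simpa using (Real.continuous_sqrt.tendsto 0)
        have h := hsqrt.comp hv2
        have heq : (Real.sqrt ∘ fun x : ℝ => (u x + K)^2) = fun x : ℝ => |u x + K| := by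
          funext t
          simp [Function.comp, Real.sqrt_sq_eq_abs]
        rwa [heq] at h
      have hvz : Tendsto (fun x => u x + K) atTop (𝓝 0) := by
        rw [tendsto_zero_iff_abs_tendsto_zero]
        exact habs2
      have hfin : Tendsto (fun x => (u x + K) - K) atTop (𝓝 (0 - K)) :=
        hvz.sub tendsto_const_nhds
      simpa using hfin
    · -- E₀ > H2 : contradiction
      exfalso
      obtain ⟨c₀, hc₀, hc₀sq⟩ : ∃ c : ℝ, 0 < c ∧ c^2 = 2*(E₀ - c2*K^3/6) :=
        ⟨Real.sqrt _, Real.sqrt_pos.2 (by linarith), Real.sq_sqrt (by linarith)⟩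
      have habs : ∀ x, y ≤ x → c₀ ≤ |p x| := by
        intro x hx
        apply le_of_sq_le_sq' hc₀.le (abs_nonneg _)
        rw [sq_abs]
        linarith [hp2 x hx, hFleH2 (u x), hc₀sq]
      have hpcon : ContinuousOn p (Set.Ici y) := fun t ht =>
        (hpc t (lt_of_lt_of_le hy0 ht)).continuousWithinAt
      rcases le_or_gt 0 (p y) with hpy | hpy
      · exact lin_escape u p y (-(M+1)) c₀ M hc₀ hu hpcon
          (by linarith [(abs_le.1 (hM y)).1]) hpy (fun x hx _ => habs x hx) hM
      · exact lin_escape (fun t => -u t) (fun t => -p t) y (-(M+1)) c₀ M hc₀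
          (fun x => (hu x).neg) hpcon.neg
          (by show -(M+1) ≤ -u y; linarith [(abs_le.1 (hM y)).2])
          (by show (0:ℝ) ≤ -p y; linarith)
          (fun x hx _ => by rw [abs_neg]; exact habs x hx)
          (fun x => by rw [abs_neg]; exact hM x)
end

section
/- Assume b1 > d1, b2 > d2 and γ^U > 0. Let θ_1^U be the unique real in (0, K1^U(1 − d1/b1)) with F^U(θ_1^U) = F^U(−K2^U(1 − d2/b2)). Then for every α ∈ (θ_1^U, K1^U(1 − d1/b1)) there exists a function χ_{1,α}^{0,U} : ℝ → ℝ which is even, nonincreasing on (0,∞), satisfies −(χ_{1,α}^{0,U})'' = f^U(χ_{1,α}^{0,U}) on (−L_{1,α}^U, L_{1,α}^U), χ_{1,α}^{0,U}(0) = α, χ_{1,α}^{0,U}(±L_{1,α}^U) = −max(K2^U, K2^F)(1 − d2/b2), and χ_{1,α}^{0,U}(x) = −max(K2^F, K2^U)(1 − d2/b2) for all x ∉ (−L_{1,α}^U, L_{1,α}^U), where L_{1,α}^U = ∫ from −max(K2^F,K2^U)(1−d2/b2) to α of dz/√(2(F^U(α) − F^U(z))). -/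
open Set Filter Topology MeasureTheory intervalIntegral


theorem myExtendDeriv {f g : ℝ → ℝ} {x l : ℝ} {s : Set ℝ} (hs : s ∈ 𝓝 x)
    (fd : ∀ y ∈ s, y ≠ x → HasDerivAt f (g y) y)
    (hf : ContinuousAt f x) (hg : Tendsto g (𝓝[≠] x) (𝓝 l)) :
    HasDerivAt f l x := by
  have A : HasDerivWithinAt f l (Ici x) x := by
    have hmem : s ∩ Ioi x ∈ 𝓝[>] x :=
      inter_mem (nhdsWithin_le_nhds hs) self_mem_nhdsWithin
    apply hasDerivWithinAt_Ici_of_tendsto_deriv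
      (fun y hy => (fd y hy.1 (ne_of_gt hy.2)).differentiableAt.differentiableWithinAt)
      hf.continuousWithinAt hmem
    have : Tendsto g (𝓝[>] x) (𝓝 l) :=
      hg.mono_left (nhdsWithin_mono _ (fun y hy => ne_of_gt hy))
    apply this.congr'
    filter_upwards [hmem] with y hy
    exact ((fd y hy.1 (ne_of_gt hy.2)).deriv).symm
  have B : HasDerivWithinAt f l (Iic x) x := by
    have hmem : s ∩ Iio x ∈ 𝓝[<] x :=
      inter_mem (nhdsWithin_le_nhds hs) self_mem_nhdsWithin
    apply hasDerivWithinAt_Iic_of_tendsto_deriv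
      (fun y hy => (fd y hy.1 (ne_of_lt hy.2)).differentiableAt.differentiableWithinAt)
      hf.continuousWithinAt hmem
    have : Tendsto g (𝓝[<] x) (𝓝 l) :=
      hg.mono_left (nhdsWithin_mono _ (fun y hy => ne_of_lt hy))
    apply this.congr'
    filter_upwards [hmem] with y hy
    exact ((fd y hy.1 (ne_of_lt hy.2)).deriv).symm
  simpa using B.union A


theorem myIntegrable {f F : ℝ → ℝ} (hf : Continuous f)
    (hF : ∀ w, HasDerivAt F (f w) w) {a α : ℝ} (haα : a < α) (hfα : 0 < f α)
    (hlt : ∀ z ∈ Set.Ico a α, F z < F α) :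
    IntervalIntegrable (fun z => 1 / Real.sqrt (2 * (F α - F z))) MeasureTheory.volume a α := by
  have hFc : Continuous F := continuous_iff_continuousAt.2 fun x => (hF x).continuousAt
  have hGc : Continuous (fun z => Real.sqrt (2 * (F α - F z))) :=
    Real.continuous_sqrt.comp (continuous_const.mul (continuous_const.sub hFc))
  obtain ⟨δ, hδpos, hδ⟩ : ∃ δ > 0, ∀ z, |z - α| < δ → f α / 2 < f z := by
    obtain ⟨δ, hδ, h⟩ := Metric.continuousAt_iff.1 hf.continuousAt (f α / 2) (by linarith)
    refine ⟨δ, hδ, fun z hz => ?_⟩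
    have := h (show dist z α < δ by rwa [Real.dist_eq])
    rw [Real.dist_eq] at this
    have := abs_lt.1 this
    linarith [this.1]
  set c : ℝ := f α / 2 with hc
  have hcpos : 0 < c := by positivity
  set m : ℝ := max (α - δ / 2) ((a + α) / 2) with hm
  have hma : a < m := lt_of_lt_of_le (by linarith) (le_max_right _ _)
  have hmα : m < α := max_lt (by linarith) (by linarith)
  have hkey : ∀ z ∈ Icc m α, c * (α - z) ≤ F α - F z := by
    intro z hz
    have hsub : ∀ w ∈ Icc z α, c ≤ f w := by
      intro w hw
      refine le_of_lt (hδ w ?_)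
      have h1 : α - δ / 2 ≤ z := le_trans (le_max_left _ _) hz.1
      have : α - δ / 2 ≤ w := le_trans h1 hw.1
      rw [abs_lt]; constructor <;> nlinarith [hw.2]
    have hint : F α - F z = ∫ w in z..α, f w := by
      rw [intervalIntegral.integral_eq_sub_of_hasDerivAt
        (fun w _ => hF w) (hf.intervalIntegrable _ _)]
    rw [hint]
    calc c * (α - z) = ∫ _ in z..α, c := by
            rw [intervalIntegral.integral_const, smul_eq_mul, mul_comm]
      _ ≤ ∫ w in z..α, f w := by
            apply intervalIntegral.integral_mono_on hz.2
              (intervalIntegrable_const) (hf.intervalIntegrable _ _)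
            intro w hw; exact hsub w hw
  have h1 : IntervalIntegrable (fun z => 1 / Real.sqrt (2 * (F α - F z)))
      MeasureTheory.volume a m := by
    apply ContinuousOn.intervalIntegrable
    apply ContinuousOn.div continuousOn_const hGc.continuousOn
    intro z hz
    rw [uIcc_of_le hma.le] at hz
    have hzlt : F z < F α := hlt z ⟨hz.1, lt_of_le_of_lt hz.2 hmα⟩
    exact Real.sqrt_ne_zero'.2 (by linarith)
  have h2 : IntervalIntegrable (fun z => 1 / Real.sqrt (2 * (F α - F z)))
      MeasureTheory.volume m α := by
    have hbound : IntervalIntegrable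
        (fun z => (Real.sqrt (2 * c))⁻¹ * ((α - z) ^ (-(1/2) : ℝ)))
        MeasureTheory.volume m α := by
      apply IntervalIntegrable.const_mul
      have hr : IntervalIntegrable (fun x : ℝ => x ^ (-(1/2) : ℝ))
          MeasureTheory.volume 0 (α - m) := intervalIntegral.intervalIntegrable_rpow' (by norm_num)
      have h2' := hr.comp_sub_left α
      first
        | simpa using h2'
        | simpa using h2'.symm
    apply hbound.mono_fun
    · exact (Measurable.div measurable_const hGc.measurable).aestronglyMeasurable
    · rw [Filter.EventuallyLE, ae_restrict_iff' measurableSet_uIoc]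
      apply Filter.Eventually.of_forall
      intro z hz
      rw [uIoc_of_le hmα.le] at hz
      have hz1 : m < z := hz.1
      have hz2 : z ≤ α := hz.2
      simp only [Real.norm_eq_abs]
      have hFz : F z ≤ F α := by
        rcases eq_or_lt_of_le hz2 with h | h
        · rw [h]
        · exact le_of_lt (hlt z ⟨le_of_lt (lt_of_lt_of_le hma hz1.le), h⟩)
      have key : Real.sqrt (2 * c) * Real.sqrt (α - z) ≤ Real.sqrt (2 * (F α - F z)) := by
        rw [← Real.sqrt_mul (by positivity)]
        apply Real.sqrt_le_sqrt
        have := hkey z ⟨hz1.le, hz2⟩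
        nlinarith
      have hrw : (α - z) ^ (-(1/2) : ℝ) = (Real.sqrt (α - z))⁻¹ := by
        rw [Real.rpow_neg (by linarith), Real.sqrt_eq_rpow]
      rw [abs_of_nonneg (by positivity), abs_of_nonneg, hrw, one_div, ← mul_inv]
      · rcases eq_or_lt_of_le hz2 with h | h
        · subst h; simp
        · apply inv_anti₀
          · have h2c : (0:ℝ) < Real.sqrt (2*c) := Real.sqrt_pos.2 (by positivity)
            have h2z : (0:ℝ) < Real.sqrt (α - z) := Real.sqrt_pos.2 (by linarith)
            positivity
          · exact key
      · exact mul_nonneg (by positivity) (Real.rpow_nonneg (by linarith) _)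
  exact h1.trans h2

theorem myBubble {f F : ℝ → ℝ} (hf : Continuous f) (hF : ∀ w, HasDerivAt F (f w) w)
    {a α : ℝ} (haα : a < α) (hfα : 0 < f α) (hlt : ∀ z ∈ Set.Ico a α, F z < F α)
    (L : ℝ) (hL : L = ∫ z in a..α, 1 / Real.sqrt (2 * (F α - F z))) :
    ∃ χ : ℝ → ℝ, (∀ x, χ (-x) = χ x) ∧ AntitoneOn χ (Set.Ioi 0) ∧
      (∀ x ∈ Set.Ioo (-L) L, DifferentiableAt ℝ χ x) ∧
      (∀ x ∈ Set.Ioo (-L) L, HasDerivAt (deriv χ) (-f (χ x)) x) ∧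
      χ 0 = α ∧ χ L = a ∧ χ (-L) = a ∧ (∀ x, x ∉ Set.Ioo (-L) L → χ x = a) := by
  have hFc : Continuous F := continuous_iff_continuousAt.2 fun x => (hF x).continuousAt
  set g : ℝ → ℝ := fun z => Real.sqrt (2 * (F α - F z)) with hgdef
  set h : ℝ → ℝ := fun z => 1 / g z with hhdef
  have hgc : Continuous g :=
    Real.continuous_sqrt.comp (continuous_const.mul (continuous_const.sub hFc))
  have hgnn : ∀ z, 0 ≤ g z := fun z => Real.sqrt_nonneg _
  have hgpos : ∀ z ∈ Ico a α, 0 < g z := fun z hz =>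
    Real.sqrt_pos.2 (by have := hlt z hz; linarith)
  have hgα : g α = 0 := by simp [hgdef]
  have hInt : IntervalIntegrable h volume a α := myIntegrable hf hF haα hfα hlt
  have hIntSub : ∀ s ∈ Icc a α, ∀ t ∈ Icc a α, IntervalIntegrable h volume s t := by
    intro s hs t ht
    apply hInt.mono_set
    apply Set.uIcc_subset_uIcc <;> rw [Set.uIcc_of_le haα.le]
    exacts [hs, ht]
  set T : ℝ → ℝ := fun s => ∫ z in s..α, h z with hTdef
  have hTα : T α = 0 := intervalIntegral.integral_same
  have hTa : T a = L := hL.symm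
  have hTsub : ∀ s ∈ Icc a α, ∀ t ∈ Icc a α, s ≤ t → T s - T t = ∫ z in s..t, h z := by
    intro s hs t ht hst
    have := intervalIntegral.integral_add_adjacent_intervals
      (hIntSub s hs t ht) (hIntSub t ht α (right_mem_Icc.2 haα.le))
    simp only [hTdef]
    linarith [this]
  have hTanti : StrictAntiOn T (Icc a α) := by
    intro s hs t ht hst
    have key : 0 < ∫ z in s..t, h z := by
      apply intervalIntegral.intervalIntegral_pos_of_pos_on (hIntSub s hs t ht) _ hst
      intro z hz
      have hzm : z ∈ Ico a α := ⟨le_of_lt (lt_of_le_of_lt hs.1 hz.1), lt_of_lt_of_le hz.2 ht.2⟩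
      have := hgpos z hzm
      simp only [hhdef]
      positivity
    have := hTsub s hs t ht hst.le
    linarith
  have hTmono : AntitoneOn T (Icc a α) := hTanti.antitoneOn
  have hTinj : InjOn T (Icc a α) := hTanti.injOn
  have hLpos : 0 < L := by
    have := hTanti (left_mem_Icc.2 haα.le) (right_mem_Icc.2 haα.le) haα
    rw [hTα, hTa] at this; exact this
  have hTmem : ∀ s ∈ Icc a α, T s ∈ Icc 0 L := by
    intro s hs
    constructor
    · have := hTmono hs (right_mem_Icc.2 haα.le) hs.2; rwa [hTα] at this
    · have := hTmono (left_mem_Icc.2 haα.le) hs hs.1; rwa [hTa] at this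
  have hTcont : ContinuousOn T (Icc a α) := by
    have hIntOn : IntegrableOn h (uIcc a α) := by
      rw [uIcc_of_le haα.le]
      exact (intervalIntegrable_iff_integrableOn_Icc_of_le haα.le).1 hInt
    have hprim := intervalIntegral.continuousOn_primitive_interval (a := a) (b := α) hIntOn
    rw [uIcc_of_le haα.le] at hprim
    have : ContinuousOn (fun s => T a - ∫ z in a..s, h z) (Icc a α) :=
      continuousOn_const.sub hprim
    apply this.congr
    intro s hs
    have := hTsub a (left_mem_Icc.2 haα.le) s hs hs.1
    simp only [hTdef] at this ⊢
    linarith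
  have hSurj : ∀ y ∈ Icc 0 L, ∃ s ∈ Icc a α, T s = y := by
    intro y hy
    have := intermediate_value_Icc' haα.le hTcont
    rw [hTα, hTa] at this
    obtain ⟨s, hs, hTs⟩ := this hy
    exact ⟨s, hs, hTs⟩
  obtain ⟨ψ, hψ⟩ : ∃ ψ : ℝ → ℝ, ∀ y ∈ Icc 0 L, ψ y ∈ Icc a α ∧ T (ψ y) = y := by
    refine ⟨fun y => if hy : y ∈ Icc 0 L then (hSurj y hy).choose else α, fun y hy => ?_⟩
    simp only [dif_pos hy]
    exact ⟨(hSurj y hy).choose_spec.1, (hSurj y hy).choose_spec.2⟩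
  have huniq : ∀ y ∈ Icc 0 L, ∀ s ∈ Icc a α, T s = y → ψ y = s := by
    intro y hy s hs hTs
    exact hTinj (hψ y hy).1 hs (by rw [(hψ y hy).2, hTs])
  have hcc0L : (0:ℝ) ∈ Icc 0 L := left_mem_Icc.2 hLpos.le
  have hccLL : L ∈ Icc 0 L := right_mem_Icc.2 hLpos.le
  have hψ0 : ψ 0 = α := huniq 0 hcc0L α (right_mem_Icc.2 haα.le) hTα
  have hψL : ψ L = a := huniq L hccLL a (left_mem_Icc.2 haα.le) hTa
  have hψT : ∀ s ∈ Icc a α, ψ (T s) = s := fun s hs => huniq _ (hTmem s hs) s hs rfl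
  have hψanti : ∀ y ∈ Icc 0 L, ∀ z ∈ Icc 0 L, y ≤ z → ψ z ≤ ψ y := by
    intro y hy z hz hyz
    by_contra hcon
    push_neg at hcon
    have := hTanti (hψ y hy).1 (hψ z hz).1 hcon
    rw [(hψ y hy).2, (hψ z hz).2] at this
    linarith
  set χ : ℝ → ℝ := fun x => ψ (min |x| L) with hχdef
  have hmmem : ∀ x : ℝ, min |x| L ∈ Icc 0 L :=
    fun x => ⟨le_min (abs_nonneg x) hLpos.le, min_le_right _ _⟩
  have heven : ∀ x, χ (-x) = χ x := by intro x; simp only [hχdef, abs_neg]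
  have hχmem : ∀ x, χ x ∈ Icc a α := fun x => (hψ _ (hmmem x)).1
  have hχ0 : χ 0 = α := by simp only [hχdef, abs_zero, min_eq_left hLpos.le, hψ0]
  have hχL : χ L = a := by
    simp only [hχdef, abs_of_pos hLpos, min_self, hψL]
  have hχout : ∀ x, x ∉ Ioo (-L) L → χ x = a := by
    intro x hx
    have : L ≤ |x| := by
      rcases not_and_or.1 hx with h1 | h2
      · push_neg at h1; exact le_abs.2 (Or.inr (by linarith))
      · push_neg at h2; exact le_abs.2 (Or.inl h2)
    simp only [hχdef, min_eq_right this, hψL]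
  have hχmL : χ (-L) = a := by rw [heven]; exact hχL
  have hanti : AntitoneOn χ (Ioi 0) := by
    intro x hx y hy hxy
    apply hψanti _ (hmmem x) _ (hmmem y)
    exact min_le_min (by rw [abs_of_pos hx, abs_of_pos (lt_of_lt_of_le hx hxy)]; exact hxy) le_rfl
  have hχeq : ∀ x ∈ Ioo 0 L, χ x = ψ x := by
    intro x hx
    simp only [hχdef, abs_of_pos hx.1, min_eq_left hx.2.le]
  have hχval : ∀ x ∈ Ioo 0 L, T (χ x) = x ∧ χ x ∈ Ioo a α := by
    intro x hx
    have hxI : x ∈ Icc 0 L := ⟨hx.1.le, hx.2.le⟩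
    have hTχ : T (χ x) = x := by rw [hχeq x hx]; exact (hψ x hxI).2
    refine ⟨hTχ, ?_⟩
    have hm := hχmem x
    rcases eq_or_lt_of_le hm.1 with h1 | h1
    · exfalso; rw [← h1, hTa] at hTχ; exact absurd hTχ.symm (ne_of_lt hx.2)
    rcases eq_or_lt_of_le hm.2 with h2 | h2
    · exfalso; rw [h2, hTα] at hTχ; exact absurd hTχ.symm (ne_of_gt hx.1)
    exact ⟨h1, h2⟩
  -- derivative of χ on (0, L)
  have hχderiv : ∀ x ∈ Ioo 0 L, HasDerivAt χ (-(g (χ x))) x := by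
    intro x hx
    obtain ⟨hTχ, hχIoo⟩ := hχval x hx
    set s₀ := χ x with hs₀
    have hgs₀ : 0 < g s₀ := hgpos s₀ ⟨hχIoo.1.le, hχIoo.2⟩
    have hhs₀ : h s₀ = 1 / g s₀ := rfl
    have hTd : HasStrictDerivAt T (-(h s₀)) s₀ := by
      apply intervalIntegral.integral_hasStrictDerivAt_left
        (hIntSub s₀ ⟨hχIoo.1.le, hχIoo.2.le⟩ α (right_mem_Icc.2 haα.le))
      · exact ⟨univ, univ_mem, (measurable_const.div hgc.measurable).aestronglyMeasurable⟩
      · exact ContinuousAt.div continuousAt_const hgc.continuousAt (ne_of_gt hgs₀)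
    have hne : -(h s₀) ≠ 0 := neg_ne_zero.2 (one_div_ne_zero (ne_of_gt hgs₀))
    have hleft : ∀ᶠ s in 𝓝 s₀, ψ (T s) = s := by
      filter_upwards [isOpen_Ioo.mem_nhds hχIoo] with s hs
      exact hψT s ⟨hs.1.le, hs.2.le⟩
    have hψd : HasStrictDerivAt ψ (-(h s₀))⁻¹ (T s₀) := hTd.to_local_left_inverse hne hleft
    rw [hTχ] at hψd
    have hval : (-(h s₀))⁻¹ = -(g s₀) := by
      show (-(1 / g s₀))⁻¹ = -(g s₀)
      rw [one_div, inv_neg, inv_inv]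
    rw [hval] at hψd
    apply hψd.hasDerivAt.congr_of_eventuallyEq
    filter_upwards [isOpen_Ioo.mem_nhds hx] with y hy
    exact hχeq y hy
  -- continuity of χ at 0
  have hχcont0 : ContinuousAt χ 0 := by
    rw [Metric.continuousAt_iff]
    intro ε hε
    set s₁ : ℝ := max (α - ε / 2) ((a + α) / 2) with hs₁def
    have hs₁a : a < s₁ := lt_of_lt_of_le (by linarith) (le_max_right _ _)
    have hs₁α : s₁ < α := max_lt (by linarith) (by linarith)
    have hs₁I : s₁ ∈ Icc a α := ⟨hs₁a.le, hs₁α.le⟩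
    have hδpos : 0 < T s₁ := by
      have := hTanti hs₁I (right_mem_Icc.2 haα.le) hs₁α
      rwa [hTα] at this
    refine ⟨T s₁, hδpos, fun x hx => ?_⟩
    rw [Real.dist_eq, sub_zero] at hx
    rw [Real.dist_eq, hχ0]
    have hy : min |x| L ∈ Icc 0 L := hmmem x
    have hlt' : s₁ < χ x := by
      by_contra hcon
      push_neg at hcon
      have h2 : T s₁ ≤ T (χ x) := hTmono (hχmem x) hs₁I hcon
      have h3 : T (χ x) = min |x| L := (hψ _ hy).2
      have h4 : min |x| L < T s₁ := lt_of_le_of_lt (min_le_left _ _) hx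
      rw [h3] at h2
      linarith
    have hub : χ x ≤ α := (hχmem x).2
    have hs₁lb : α - ε / 2 ≤ s₁ := le_max_left _ _
    rw [abs_lt]
    constructor <;> [linarith; linarith]
  -- the candidate derivative function
  set D : ℝ → ℝ := fun x => if x < 0 then g (χ x) else -(g (χ x)) with hDdef
  have hD0 : D 0 = 0 := by
    simp only [hDdef]
    rw [if_neg (lt_irrefl 0), hχ0, hgα, neg_zero]
  have hDpos : ∀ x ∈ Ioo 0 L, D x = -(g (χ x)) := fun x hx => if_neg (not_lt.2 hx.1.le)
  have hDneg : ∀ x ∈ Ioo (-L) (0:ℝ), D x = g (χ x) := fun x hx => if_pos hx.2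
  have hχdneg : ∀ x ∈ Ioo (-L) (0:ℝ), HasDerivAt χ (g (χ x)) x := by
    intro x hx
    have hx' : -x ∈ Ioo 0 L := ⟨by linarith [hx.2], by linarith [hx.1]⟩
    have h1 := hχderiv (-x) hx'
    have h2 : HasDerivAt (fun y => χ (-y)) (-(g (χ (-x))) * (-1)) x :=
      h1.comp x (hasDerivAt_neg x)
    have h3 : (fun y => χ (-y)) = χ := funext heven
    rw [h3] at h2
    have h4 : -(g (χ (-x))) * (-1) = g (χ x) := by rw [heven x]; ring
    rwa [h4] at h2
  have hχdall : ∀ x ∈ Ioo (-L) L, x ≠ 0 → HasDerivAt χ (D x) x := by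
    intro x hx hx0
    rcases lt_or_gt_of_ne hx0 with hneg | hpos
    · rw [hDneg x ⟨hx.1, hneg⟩]; exact hχdneg x ⟨hx.1, hneg⟩
    · rw [hDpos x ⟨hpos, hx.2⟩]; exact hχderiv x ⟨hpos, hx.2⟩
  have hgχ0 : Tendsto (fun y => g (χ y)) (𝓝 0) (𝓝 0) := by
    have h1 : ContinuousAt (fun y => g (χ y)) 0 := (hgc.continuousAt).comp hχcont0
    have h2 : g (χ 0) = 0 := by rw [hχ0, hgα]
    simpa [h2] using h1.tendsto
  have hb1 : ∀ y, -(g (χ y)) ≤ D y := by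
    intro y
    simp only [hDdef]
    split
    · linarith [hgnn (χ y)]
    · exact le_rfl
  have hb2 : ∀ y, D y ≤ g (χ y) := by
    intro y
    simp only [hDdef]
    split
    · exact le_rfl
    · linarith [hgnn (χ y)]
  have hDtend : Tendsto D (𝓝 0) (𝓝 0) := by
    have hneg := hgχ0.neg
    rw [neg_zero] at hneg
    exact tendsto_of_tendsto_of_tendsto_of_le_of_le hneg hgχ0 hb1 hb2
  have h0mem : (0:ℝ) ∈ Ioo (-L) L := ⟨by linarith, hLpos⟩
  have hχd0 : HasDerivAt χ (D 0) 0 := by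
    rw [hD0]
    exact myExtendDeriv (isOpen_Ioo.mem_nhds h0mem) hχdall hχcont0
      (hDtend.mono_left nhdsWithin_le_nhds)
  have hχdAll : ∀ x ∈ Ioo (-L) L, HasDerivAt χ (D x) x := by
    intro x hx
    rcases eq_or_ne x 0 with rfl | hne0
    · exact hχd0
    · exact hχdall x hx hne0
  have hdiff : ∀ x ∈ Ioo (-L) L, DifferentiableAt ℝ χ x :=
    fun x hx => (hχdAll x hx).differentiableAt
  have hderiveq : ∀ x ∈ Ioo (-L) L, deriv χ x = D x := fun x hx => (hχdAll x hx).deriv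
  have hgd : ∀ s ∈ Ioo a α, HasDerivAt g (2 * (-(f s)) / (2 * g s)) s := by
    intro s hs
    have hGd : HasDerivAt (fun y => 2 * (F α - F y)) (2 * (-(f s))) s :=
      (((hF s).const_sub (F α)).const_mul 2)
    have hGne : 2 * (F α - F s) ≠ 0 := by
      have := hlt s ⟨hs.1.le, hs.2⟩
      exact ne_of_gt (by linarith)
    exact hGd.sqrt hGne
  have hD2 : ∀ x ∈ Ioo (-L) L, x ≠ 0 → HasDerivAt D (-(f (χ x))) x := by
    intro x hx hx0
    rcases lt_or_gt_of_ne hx0 with hneg | hpos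
    · have hxm : x ∈ Ioo (-L) (0:ℝ) := ⟨hx.1, hneg⟩
      have hx' : -x ∈ Ioo 0 L := ⟨by linarith, by linarith [hx.1]⟩
      have hsI : χ x ∈ Ioo a α := by
        rw [← heven x]; exact (hχval (-x) hx').2
      have hg0 : g (χ x) ≠ 0 := ne_of_gt (hgpos _ ⟨hsI.1.le, hsI.2⟩)
      have hder : HasDerivAt (fun y => g (χ y))
          ((2 * (-(f (χ x))) / (2 * g (χ x))) * (g (χ x))) x :=
        (hgd (χ x) hsI).comp x (hχdneg x hxm)
      have hval : (2 * (-(f (χ x))) / (2 * g (χ x))) * (g (χ x)) = -(f (χ x)) := by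
        field_simp
      rw [hval] at hder
      apply hder.congr_of_eventuallyEq
      filter_upwards [isOpen_Ioo.mem_nhds hxm] with y hy
      exact hDneg y hy
    · have hxp : x ∈ Ioo 0 L := ⟨hpos, hx.2⟩
      have hsI : χ x ∈ Ioo a α := (hχval x hxp).2
      have hg0 : g (χ x) ≠ 0 := ne_of_gt (hgpos _ ⟨hsI.1.le, hsI.2⟩)
      have hder : HasDerivAt (fun y => -(g (χ y)))
          (-((2 * (-(f (χ x))) / (2 * g (χ x))) * (-(g (χ x))))) x :=
        ((hgd (χ x) hsI).comp x (hχderiv x hxp)).neg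
      have hval : -((2 * (-(f (χ x))) / (2 * g (χ x))) * (-(g (χ x)))) = -(f (χ x)) := by
        field_simp
      rw [hval] at hder
      apply hder.congr_of_eventuallyEq
      filter_upwards [isOpen_Ioo.mem_nhds hxp] with y hy
      exact hDpos y hy
  have hD20 : HasDerivAt D (-(f (χ 0))) 0 := by
    apply myExtendDeriv (isOpen_Ioo.mem_nhds h0mem) hD2
    · show Tendsto D (𝓝 0) (𝓝 (D 0))
      rw [hD0]; exact hDtend
    · have h1 : ContinuousAt (fun y => -(f (χ y))) 0 := ((hf.continuousAt).comp hχcont0).neg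
      exact h1.tendsto.mono_left nhdsWithin_le_nhds
  have hD2All : ∀ x ∈ Ioo (-L) L, HasDerivAt D (-(f (χ x))) x := by
    intro x hx
    rcases eq_or_ne x 0 with rfl | hne0
    · exact hD20
    · exact hD2 x hx hne0
  have hfinal : ∀ x ∈ Ioo (-L) L, HasDerivAt (deriv χ) (-(f (χ x))) x := by
    intro x hx
    apply (hD2All x hx).congr_of_eventuallyEq
    filter_upwards [isOpen_Ioo.mem_nhds hx] with y hy
    exact hderiveq y hy
  exact ⟨χ, heven, hanti, hdiff, hfinal, hχ0, hχL, hχmL, hχout⟩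

section facts

variable {b1 b2 d1 d2 K1 K2 : ℝ}

theorem rt_cont : Continuous (reactionTerm b1 d1 b2 d2 K1 K2) := by
  unfold reactionTerm
  fun_prop

theorem rp_deriv (w : ℝ) :
    HasDerivAt (reactionPotential b1 d1 b2 d2 K1 K2) (reactionTerm b1 d1 b2 d2 K1 K2 w) w :=
  ((rt_cont.integral_hasStrictDerivAt 0 w).hasDerivAt :)

theorem rt_nonneg_eq (w : ℝ) (hw : 0 ≤ w) :
    reactionTerm b1 d1 b2 d2 K1 K2 w = w * (b1 * (1 - w / K1) - d1) := by
  unfold reactionTerm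
  rw [max_eq_left hw, max_eq_right (neg_nonpos.2 hw)]
  ring

theorem rt_nonpos_eq (w : ℝ) (hw : w ≤ 0) :
    reactionTerm b1 d1 b2 d2 K1 K2 w = (-w) * (d2 - b2 * (1 - (-w) / K2)) := by
  unfold reactionTerm
  rw [max_eq_right hw, max_eq_left (neg_nonneg.2 hw)]
  ring

theorem rt_pos_of_pos (hb1 : 0 < b1) (hK1 : 0 < K1) {w : ℝ}
    (hw : w ∈ Ioo 0 (K1 * (1 - d1 / b1))) : 0 < reactionTerm b1 d1 b2 d2 K1 K2 w := by
  rw [rt_nonneg_eq w hw.1.le]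
  apply mul_pos hw.1
  have h1 : w / K1 < 1 - d1 / b1 := by
    rw [div_lt_iff₀ hK1]
    linarith [hw.2, mul_comm K1 (1 - d1 / b1)]
  have h2 : d1 / b1 < 1 - w / K1 := by linarith
  have := (div_lt_iff₀ hb1).1 h2
  linarith [mul_comm (1 - w / K1) b1]

theorem rt_neg_of_mem (hb2 : 0 < b2) (hK2 : 0 < K2) {w : ℝ}
    (hw : w ∈ Ioo (-(K2 * (1 - d2 / b2))) 0) : reactionTerm b1 d1 b2 d2 K1 K2 w < 0 := by
  rw [rt_nonpos_eq w hw.2.le]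
  have hv : 0 < -w := by linarith [hw.2]
  have hvm : -w < K2 * (1 - d2 / b2) := by linarith [hw.1]
  apply mul_neg_of_pos_of_neg hv
  have h1 : -w / K2 < 1 - d2 / b2 := by
    rw [div_lt_iff₀ hK2]
    linarith [mul_comm K2 (1 - d2 / b2)]
  have h2 : d2 / b2 < 1 - (-w) / K2 := by linarith
  have := (div_lt_iff₀ hb2).1 h2
  linarith [mul_comm (1 - (-w) / K2) b2]

theorem rt_pos_of_lt (hb2 : 0 < b2) (hK2 : 0 < K2) {w : ℝ}
    (hw : w < -(K2 * (1 - d2 / b2))) (hd2b2 : d2 < b2) : 0 < reactionTerm b1 d1 b2 d2 K1 K2 w := by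
  have hm : 0 < K2 * (1 - d2 / b2) := by
    apply mul_pos hK2
    have : d2 / b2 < 1 := (div_lt_one hb2).2 hd2b2
    linarith
  rw [rt_nonpos_eq w (by linarith)]
  have hv : 0 < -w := by linarith
  apply mul_pos hv
  have h1 : 1 - d2 / b2 < -w / K2 := by
    rw [lt_div_iff₀ hK2]
    linarith [mul_comm K2 (1 - d2 / b2)]
  have h2 : 1 - (-w) / K2 < d2 / b2 := by linarith
  have := (lt_div_iff₀ hb2).1 h2
  linarith [mul_comm (1 - (-w) / K2) b2]

end facts

/-- Lemma lem:bubbleU2: existence of the critical bubbles `χ_{1,α}^{0,U}` of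
`f^U` when `γ^U > 0`. -/
theorem stmt14 (b1 b2 d1 d2 K1F K1U K2F K2U : ℝ)
    (hb1 : 0 < b1) (hb2 : 0 < b2) (hd1 : 0 < d1) (hd2 : 0 < d2)
    (hK1F : 0 < K1F) (hK1U : 0 < K1U) (hK2F : 0 < K2F) (hK2U : 0 < K2U)
    (hbd1 : d1 < b1) (hbd2 : d2 < b2)
    -- γ^U > 0
    (hγU : 0 < reactionPotential b1 d1 b2 d2 K1U K2U (K1U * (1 - d1 / b1))
            - reactionPotential b1 d1 b2 d2 K1U K2U (-(K2U * (1 - d2 / b2))))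
    -- θ_1^U : the unique real in (0, K1^U(1 - d1/b1)) with F^U(θ_1^U) = F^U(-K2^U(1 - d2/b2))
    (θ1U : ℝ) (hθmem : θ1U ∈ Set.Ioo 0 (K1U * (1 - d1 / b1)))
    (hθval : reactionPotential b1 d1 b2 d2 K1U K2U θ1U
      = reactionPotential b1 d1 b2 d2 K1U K2U (-(K2U * (1 - d2 / b2)))) :
    ∀ α ∈ Set.Ioo θ1U (K1U * (1 - d1 / b1)), ∀ L : ℝ,
      L = ∫ z in (-(max K2F K2U * (1 - d2 / b2)))..α,
            1 / Real.sqrt (2 * (reactionPotential b1 d1 b2 d2 K1U K2U α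
                - reactionPotential b1 d1 b2 d2 K1U K2U z)) →
      ∃ χ : ℝ → ℝ,
        (∀ x, χ (-x) = χ x) ∧
        AntitoneOn χ (Set.Ioi 0) ∧
        (∀ x ∈ Set.Ioo (-L) L, DifferentiableAt ℝ χ x) ∧
        (∀ x ∈ Set.Ioo (-L) L,
          HasDerivAt (deriv χ) (-(reactionTerm b1 d1 b2 d2 K1U K2U (χ x))) x) ∧
        χ 0 = α ∧
        χ L = -(max K2F K2U * (1 - d2 / b2)) ∧
        χ (-L) = -(max K2F K2U * (1 - d2 / b2)) ∧
        (∀ x, x ∉ Set.Ioo (-L) L → χ x = -(max K2F K2U * (1 - d2 / b2))) := by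
  intro α hα L hL
  have h1m : 0 < 1 - d2 / b2 := by
    have : d2 / b2 < 1 := (div_lt_one hb2).2 hbd2
    linarith
  have hmUpos : 0 < K2U * (1 - d2 / b2) := mul_pos hK2U h1m
  have hamU : -(max K2F K2U * (1 - d2 / b2)) ≤ -(K2U * (1 - d2 / b2)) := by
    have : K2U * (1 - d2 / b2) ≤ max K2F K2U * (1 - d2 / b2) :=
      mul_le_mul_of_nonneg_right (le_max_right _ _) h1m.le
    linarith
  have ha0 : -(max K2F K2U * (1 - d2 / b2)) < 0 := by linarith
  have hα0 : 0 < α := hθmem.1.trans hα.1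
  have haα : -(max K2F K2U * (1 - d2 / b2)) < α := ha0.trans hα0
  have hfα : 0 < reactionTerm b1 d1 b2 d2 K1U K2U α :=
    rt_pos_of_pos hb1 hK1U ⟨hα0, hα.2⟩
  have hFc : Continuous (reactionPotential b1 d1 b2 d2 K1U K2U) :=
    continuous_iff_continuousAt.2 fun x => (rp_deriv x).continuousAt
  have hderiv : deriv (reactionPotential b1 d1 b2 d2 K1U K2U)
      = reactionTerm b1 d1 b2 d2 K1U K2U := funext fun w => (rp_deriv w).deriv
  have hmono : StrictMonoOn (reactionPotential b1 d1 b2 d2 K1U K2U)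
      (Icc 0 (K1U * (1 - d1 / b1))) := by
    apply strictMonoOn_of_deriv_pos (convex_Icc _ _) hFc.continuousOn
    intro w hw
    rw [interior_Icc] at hw
    rw [hderiv]
    exact rt_pos_of_pos hb1 hK1U hw
  have hanti : AntitoneOn (reactionPotential b1 d1 b2 d2 K1U K2U)
      (Icc (-(K2U * (1 - d2 / b2))) 0) := by
    apply StrictAntiOn.antitoneOn
    apply strictAntiOn_of_deriv_neg (convex_Icc _ _) hFc.continuousOn
    intro w hw
    rw [interior_Icc] at hw
    rw [hderiv]
    exact rt_neg_of_mem hb2 hK2U hw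
  have hmono2 : MonotoneOn (reactionPotential b1 d1 b2 d2 K1U K2U)
      (Icc (-(max K2F K2U * (1 - d2 / b2))) (-(K2U * (1 - d2 / b2)))) := by
    apply StrictMonoOn.monotoneOn
    apply strictMonoOn_of_deriv_pos (convex_Icc _ _) hFc.continuousOn
    intro w hw
    rw [interior_Icc] at hw
    rw [hderiv]
    exact rt_pos_of_lt hb2 hK2U hw.2 hbd2
  have hθIcc : θ1U ∈ Icc 0 (K1U * (1 - d1 / b1)) := ⟨hθmem.1.le, hθmem.2.le⟩
  have hαIcc : α ∈ Icc 0 (K1U * (1 - d1 / b1)) := ⟨hα0.le, hα.2.le⟩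
  have hθltα : reactionPotential b1 d1 b2 d2 K1U K2U θ1U
      < reactionPotential b1 d1 b2 d2 K1U K2U α := hmono hθIcc hαIcc hα.1
  have hlt : ∀ z ∈ Ico (-(max K2F K2U * (1 - d2 / b2))) α,
      reactionPotential b1 d1 b2 d2 K1U K2U z < reactionPotential b1 d1 b2 d2 K1U K2U α := by
    intro z hz
    rcases le_or_gt z (-(K2U * (1 - d2 / b2))) with h1 | h1
    · have := hmono2 ⟨hz.1, h1⟩ ⟨hamU, le_refl _⟩ h1
      rw [← hθval] at this
      linarith
    rcases le_or_gt z 0 with h2 | h2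
    · have := hanti (left_mem_Icc.2 (by linarith)) ⟨h1.le, h2⟩ h1.le
      rw [← hθval] at this
      linarith
    · exact hmono ⟨h2.le, le_trans hz.2.le hα.2.le⟩ hαIcc hz.2
  obtain ⟨χ, he, han, hd, hdd, h0, hLv, hmLv, hout⟩ :=
    myBubble rt_cont rp_deriv haα hfα hlt L hL
  exact ⟨χ, he, han, hd, hdd, h0, hLv, hmLv, hout⟩
end
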